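/- Let $(E, \Sigma)$ be a measurable space and let $\mathcal{K}$ denote the space of bounded signed kernels $k: E_1 \times \Sigma_2 \to \mathbb{R}$ with norm $\|k\| = \sup_{x} |k|(x, E_2)$, where $|k|(x,\cdot)$ is the total variation. Let $p$ be a stochastic (probability) kernel from $S \times A$ to $S$, and let $\pi, \pi'$ be stochastic kernels from $S$ to $A$. Define $P_\pi(ds'|s) = \int_A p(ds'|s,a)\,\pi(da|s)$ and the discounted occupancy kernel $d^{\pi} = (1-\beta)\sum_{k=0}^\infty \beta^k P_\pi^k$ for $\beta \in (0,1)$. Then $\|d^{\pi'} - d^{\pi}\| \le \frac{\beta}{1-\beta}\, \|\pi' - \pi\|$. -/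

import Mathlib

open MeasureTheory ProbabilityTheory

/-- Total-variation style distance: `sup` over measurable sets of the difference
of measures. -/
noncomputable def dTV {S : Type*} [MeasurableSpace S] (μ ν : Measure S) : ℝ :=
  ⨆ A : {A : Set S // MeasurableSet A}, |(μ A).toReal - (ν A).toReal|

/-- `k`-fold iterate of a measure-valued transition map, starting from Dirac. -/
noncomputable def iterK {S : Type*} [MeasurableSpace S]
    (P : S → Measure S) : ℕ → S → Measure S
  | 0 => fun s => Measure.dirac s
  | (n + 1) => fun s => (iterK P n s).bind P

/-- Discounted occupancy measure `d^π(s) = (1-β) ∑_k β^k P_π^k(s)`. -/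
noncomputable def occ {S : Type*} [MeasurableSpace S]
    (β : ℝ) (P : S → Measure S) (s : S) : Measure S :=
  ENNReal.ofReal (1 - β) •
    Measure.sum (fun k : ℕ => ENNReal.ofReal (β ^ k) • iterK P k s)

/-! Binding with a Markov kernel does not increase the total variation distance. Hence the
one-step laws `P_{π'}(s)` and `P_π(s)` are within `‖π' - π‖`, the `k`-step laws within
`k ‖π' - π‖` by telescoping, and the occupancy measures within
`(1 - β) ∑ₖ k βᵏ ‖π' - π‖ = β / (1 - β) ‖π' - π‖`. -/

open scoped ENNReal

namespace ENNReal

lemma toReal_sub_toReal_le_of_le_add {a b : ℝ≥0∞} {c : ℝ} (hc : 0 ≤ c)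
    (hab : a ≤ b + ENNReal.ofReal c) (hba : b ≤ a + ENNReal.ofReal c) :
    a.toReal - b.toReal ≤ c := by
  by_cases hb : b = ∞
  · have ha : a = ∞ := by simpa [hb] using hba
    simp [ha, hb, hc]
  · have := ENNReal.toReal_le_add hab hb ENNReal.ofReal_ne_top
    rw [ENNReal.toReal_ofReal hc] at this
    linarith

end ENNReal

section dTV

variable {S X : Type*} [MeasurableSpace S] [MeasurableSpace X]

lemma dTV_nonneg (μ ν : Measure S) : 0 ≤ dTV μ ν :=
  Real.iSup_nonneg fun _ => abs_nonneg _

lemma dTV_comm (μ ν : Measure S) : dTV μ ν = dTV ν μ := by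
  simp_rw [dTV, abs_sub_comm]

lemma dTV_self (μ : Measure S) : dTV μ μ = 0 := by
  simp [dTV]

lemma dTV_le_of_le_add {μ ν : Measure S} {c : ℝ} (hc : 0 ≤ c)
    (hμν : ∀ B, MeasurableSet B → μ B ≤ ν B + ENNReal.ofReal c)
    (hνμ : ∀ B, MeasurableSet B → ν B ≤ μ B + ENNReal.ofReal c) :
    dTV μ ν ≤ c :=
  ciSup_le fun ⟨B, hB⟩ => abs_sub_le_iff.2
    ⟨ENNReal.toReal_sub_toReal_le_of_le_add hc (hμν B hB) (hνμ B hB),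
      ENNReal.toReal_sub_toReal_le_of_le_add hc (hνμ B hB) (hμν B hB)⟩

lemma dTV_le_one (μ ν : Measure S) [IsProbabilityMeasure μ] [IsProbabilityMeasure ν] :
    dTV μ ν ≤ 1 := by
  refine dTV_le_of_le_add zero_le_one (fun B _ => ?_) (fun B _ => ?_) <;>
    simpa using prob_le_one.trans le_add_self

section Finite

variable (μ ν : Measure S) [IsFiniteMeasure μ] [IsFiniteMeasure ν]

lemma bddAbove_abs_sub_measure :
    BddAbove (Set.range fun B : {B : Set S // MeasurableSet B} =>
      |(μ B).toReal - (ν B).toReal|) := by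
  refine ⟨(μ .univ).toReal + (ν .univ).toReal, Set.forall_mem_range.2 fun B => ?_⟩
  have hμ := ENNReal.toReal_mono (measure_ne_top μ _) (measure_mono (Set.subset_univ B.1))
  have hν := ENNReal.toReal_mono (measure_ne_top ν _) (measure_mono (Set.subset_univ B.1))
  exact (abs_sub _ _).trans (by simpa using add_le_add hμ hν)

lemma abs_sub_le_dTV {B : Set S} (hB : MeasurableSet B) :
    |(μ B).toReal - (ν B).toReal| ≤ dTV μ ν :=
  le_ciSup (bddAbove_abs_sub_measure μ ν) ⟨B, hB⟩

lemma le_add_dTV {B : Set S} (hB : MeasurableSet B) :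
    μ B ≤ ν B + ENNReal.ofReal (dTV μ ν) := by
  have h := (le_abs_self _).trans (abs_sub_le_dTV μ ν hB)
  rw [← ENNReal.ofReal_toReal (measure_ne_top μ B), ← ENNReal.ofReal_toReal (measure_ne_top ν B),
    ← ENNReal.ofReal_add ENNReal.toReal_nonneg (dTV_nonneg μ ν)]
  exact ENNReal.ofReal_le_ofReal (by linarith)

lemma dTV_triangle (ρ : Measure S) [IsFiniteMeasure ρ] :
    dTV μ ρ ≤ dTV μ ν + dTV ν ρ :=
  ciSup_le fun ⟨_, hB⟩ =>
    (abs_sub_le _ _ _).trans (add_le_add (abs_sub_le_dTV μ ν hB) (abs_sub_le_dTV ν ρ hB))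

/-- On a Hahn set `D` of `μ - ν` the excess of `∫ f` is at most `μ D - ν D` because `f ≤ 1`;
off `D` there is no excess at all. -/
lemma lintegral_le_lintegral_add_dTV {f : S → ℝ≥0∞} (hf1 : ∀ x, f x ≤ 1) :
    ∫⁻ x, f x ∂μ ≤ ∫⁻ x, f x ∂ν + ENNReal.ofReal (dTV μ ν) := by
  obtain ⟨D, hD⟩ := exists_isHahnDecomposition ν μ
  have hDc : ∫⁻ x in Dᶜ, f x ∂μ ≤ ∫⁻ x in Dᶜ, f x ∂ν := lintegral_mono' hD.ge_on_compl le_rfl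
  have hD_excess : ∫⁻ x, f x ∂(μ.restrict D - ν.restrict D) ≤ ENNReal.ofReal (dTV μ ν) :=
    calc ∫⁻ x, f x ∂(μ.restrict D - ν.restrict D)
        ≤ ∫⁻ _, 1 ∂(μ.restrict D - ν.restrict D) := lintegral_mono hf1
      _ = μ D - ν D := by
        rw [lintegral_one, Measure.sub_apply .univ hD.le_on, Measure.restrict_apply_univ,
          Measure.restrict_apply_univ]
      _ ≤ ENNReal.ofReal (dTV μ ν) := tsub_le_iff_left.2 (le_add_dTV μ ν hD.measurableSet)
  have hDμ : ∫⁻ x in D, f x ∂μ ≤ ∫⁻ x in D, f x ∂ν + ENNReal.ofReal (dTV μ ν) := by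
    rw [← Measure.sub_add_cancel_of_le hD.le_on, lintegral_add_measure, add_comm]
    gcongr
  calc ∫⁻ x, f x ∂μ = ∫⁻ x in D, f x ∂μ + ∫⁻ x in Dᶜ, f x ∂μ :=
        (lintegral_add_compl f hD.measurableSet).symm
    _ ≤ (∫⁻ x in D, f x ∂ν + ENNReal.ofReal (dTV μ ν)) + ∫⁻ x in Dᶜ, f x ∂ν := add_le_add hDμ hDc
    _ = ∫⁻ x, f x ∂ν + ENNReal.ofReal (dTV μ ν) := by
        rw [add_right_comm, lintegral_add_compl f hD.measurableSet]

lemma dTV_bind_le (κ : Kernel S X) [IsMarkovKernel κ] :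
    dTV (μ.bind κ) (ν.bind κ) ≤ dTV μ ν := by
  have key : ∀ (μ ν : Measure S) [IsFiniteMeasure μ] [IsFiniteMeasure ν] (B : Set X),
      MeasurableSet B → μ.bind κ B ≤ ν.bind κ B + ENNReal.ofReal (dTV μ ν) := by
    intro μ ν _ _ B hB
    rw [Measure.bind_apply hB κ.aemeasurable, Measure.bind_apply hB κ.aemeasurable]
    exact lintegral_le_lintegral_add_dTV μ ν fun _ => prob_le_one
  exact dTV_le_of_le_add (dTV_nonneg μ ν) (key μ ν) (dTV_comm μ ν ▸ key ν μ)

end Finite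

lemma dTV_bind_le_of_forall_dTV_le (μ : Measure X) [IsProbabilityMeasure μ]
    (κ' κ : Kernel X S) [IsMarkovKernel κ'] [IsMarkovKernel κ] {c : ℝ} (hc : 0 ≤ c)
    (hκ : ∀ x, dTV (κ' x) (κ x) ≤ c) :
    dTV (μ.bind κ') (μ.bind κ) ≤ c := by
  have key : ∀ (κ' κ : Kernel X S) [IsMarkovKernel κ'] [IsMarkovKernel κ],
      (∀ x, dTV (κ' x) (κ x) ≤ c) → ∀ B, MeasurableSet B →
        μ.bind κ' B ≤ μ.bind κ B + ENNReal.ofReal c := by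
    intro κ' κ _ _ hκ B hB
    rw [Measure.bind_apply hB κ'.aemeasurable, Measure.bind_apply hB κ.aemeasurable]
    calc ∫⁻ x, κ' x B ∂μ ≤ ∫⁻ x, (κ x B + ENNReal.ofReal c) ∂μ :=
          lintegral_mono fun x =>
            (le_add_dTV _ _ hB).trans (by gcongr; exact hκ x)
      _ = ∫⁻ x, κ x B ∂μ + ENNReal.ofReal c := by
          rw [lintegral_add_right _ measurable_const, lintegral_const, measure_univ, mul_one]
  exact dTV_le_of_le_add hc (key κ' κ hκ) (key κ κ' fun x => dTV_comm (κ x) (κ' x) ▸ hκ x)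

end dTV

section iterK

variable {S : Type*} [MeasurableSpace S]

instance (κ : Kernel S S) [IsMarkovKernel κ] (n : ℕ) (s : S) :
    IsProbabilityMeasure (iterK κ n s) := by
  induction n with
  | zero => exact Measure.dirac.isProbabilityMeasure
  | succ n _ => exact inferInstanceAs (IsProbabilityMeasure ((iterK κ n s).bind κ))

lemma dTV_iterK_le (κ' κ : Kernel S S) [IsMarkovKernel κ'] [IsMarkovKernel κ] {c : ℝ}
    (hc : 0 ≤ c) (hκ : ∀ x, dTV (κ' x) (κ x) ≤ c) (n : ℕ) (s : S) :
    dTV (iterK κ' n s) (iterK κ n s) ≤ n * c := by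
  induction n with
  | zero => simp [iterK, dTV_self]
  | succ n ih =>
    calc dTV ((iterK κ' n s).bind κ') ((iterK κ n s).bind κ)
        ≤ dTV ((iterK κ' n s).bind κ') ((iterK κ' n s).bind κ)
          + dTV ((iterK κ' n s).bind κ) ((iterK κ n s).bind κ) := dTV_triangle _ _ _
      _ ≤ c + n * c :=
          add_le_add (dTV_bind_le_of_forall_dTV_le _ κ' κ hc hκ) ((dTV_bind_le _ _ κ).trans ih)
      _ = (n + 1 : ℕ) * c := by push_cast; ring

end iterK

section occ

variable {S : Type*} [MeasurableSpace S]

lemma occ_apply (β : ℝ) (P : S → Measure S) (s : S) {B : Set S} (hB : MeasurableSet B) :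
    occ β P s B = ENNReal.ofReal (1 - β) * ∑' k : ℕ, ENNReal.ofReal (β ^ k) * iterK P k s B := by
  simp [occ, Measure.sum_apply _ hB]

lemma occ_apply_le_add {β c : ℝ} (hβ0 : 0 ≤ β) (hβ1 : β < 1) (hc : 0 ≤ c)
    {P' P : S → Measure S} {s : S} {B : Set S} (hB : MeasurableSet B)
    (h : ∀ k : ℕ, iterK P' k s B ≤ iterK P k s B + ENNReal.ofReal (k * c)) :
    occ β P' s B ≤ occ β P s B + ENNReal.ofReal (β / (1 - β) * c) := by
  have h1β : 0 < 1 - β := sub_pos.2 hβ1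
  have hβnorm : ‖β‖ < 1 := by rwa [Real.norm_of_nonneg hβ0]
  have hgeom : ∑' k : ℕ, ENNReal.ofReal (β ^ k) * ENNReal.ofReal (k * c)
      = ENNReal.ofReal (β / (1 - β) ^ 2 * c) := by
    simp_rw [← ENNReal.ofReal_mul (pow_nonneg hβ0 _)]
    have hsum : Summable fun k : ℕ => (k : ℝ) * β ^ k := by
      simpa using summable_pow_mul_geometric_of_norm_lt_one 1 hβnorm
    rw [← ENNReal.ofReal_tsum_of_nonneg (fun k => by positivity)
      (by simpa [mul_comm, mul_left_comm] using hsum.mul_left c)]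
    congr 1
    rw [← tsum_coe_mul_geometric_of_norm_lt_one hβnorm, ← tsum_mul_right]
    exact tsum_congr fun k => by ring
  calc occ β P' s B
      = ENNReal.ofReal (1 - β) * ∑' k : ℕ, ENNReal.ofReal (β ^ k) * iterK P' k s B :=
        occ_apply β P' s hB
    _ ≤ ENNReal.ofReal (1 - β) * ∑' k : ℕ, (ENNReal.ofReal (β ^ k) * iterK P k s B
          + ENNReal.ofReal (β ^ k) * ENNReal.ofReal (k * c)) := by
        gcongr with k
        rw [← mul_add]
        gcongr
        exact h k
    _ = occ β P s B + ENNReal.ofReal (1 - β) * ENNReal.ofReal (β / (1 - β) ^ 2 * c) := by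
        rw [ENNReal.tsum_add, hgeom, mul_add, occ_apply β P s hB]
    _ = occ β P s B + ENNReal.ofReal (β / (1 - β) * c) := by
        rw [← ENNReal.ofReal_mul h1β.le]
        congr 2
        field_simp

lemma dTV_occ_le (κ' κ : Kernel S S) [IsMarkovKernel κ'] [IsMarkovKernel κ]
    {β c : ℝ} (hβ0 : 0 ≤ β) (hβ1 : β < 1) (hc : 0 ≤ c)
    (hκ : ∀ x, dTV (κ' x) (κ x) ≤ c) (s : S) :
    dTV (occ β κ' s) (occ β κ s) ≤ β / (1 - β) * c := by
  have hiter : ∀ n, dTV (iterK κ' n s) (iterK κ n s) ≤ n * c :=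
    fun n => dTV_iterK_le κ' κ hc hκ n s
  refine dTV_le_of_le_add (mul_nonneg (div_nonneg hβ0 (sub_nonneg.2 hβ1.le)) hc)
    (fun B hB => occ_apply_le_add hβ0 hβ1 hc hB fun k => ?_)
    (fun B hB => occ_apply_le_add hβ0 hβ1 hc hB fun k => ?_)
  · exact (le_add_dTV _ _ hB).trans (by gcongr; exact hiter k)
  · exact (le_add_dTV _ _ hB).trans (by gcongr; exact dTV_comm (iterK κ' k s) _ ▸ hiter k)

end occ

namespace ProbabilityTheory.Kernel

lemma comp_id_prod_apply {S A : Type*} [MeasurableSpace S] [MeasurableSpace A]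
    (p : Kernel (S × A) S) (pol : Kernel S A) [IsSFiniteKernel pol] (s : S) :
    (p ∘ₖ (Kernel.id ×ₖ pol)) s = (pol s).bind (fun a => p (s, a)) := by
  ext B hB
  rw [Kernel.comp_apply' _ _ _ hB, Kernel.lintegral_id_prod (p.measurable_coe hB),
    Measure.bind_apply (f := fun a => p (s, a)) hB
      (p.measurable.comp measurable_prodMk_left).aemeasurable]

end ProbabilityTheory.Kernel

/-- Lipschitz dependence of the discounted occupancy kernel on the policy:
`‖d^{π'} - d^{π}‖ ≤ (β/(1-β)) ‖π' - π‖` in the bounded-kernel (sup of total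
variation) norms. -/
theorem occupancy_tv_lipschitz
    {S A : Type*} [MeasurableSpace S] [MeasurableSpace A]
    (β : ℝ) (hβ : β ∈ Set.Ioo (0:ℝ) 1)
    (p : Kernel (S × A) S) [IsMarkovKernel p]
    (pol pol' : Kernel S A) [IsMarkovKernel pol] [IsMarkovKernel pol']
    (Ppol Ppol' : S → Measure S)
    (hP : ∀ s, Ppol s = (pol s).bind (fun a => p (s, a)))
    (hP' : ∀ s, Ppol' s = (pol' s).bind (fun a => p (s, a))) :
    (⨆ s : S, dTV (occ β Ppol' s) (occ β Ppol s)) ≤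
      β / (1 - β) * ⨆ s : S, dTV (pol' s) (pol s) := by
  obtain ⟨hβ0, hβ1⟩ := hβ
  set c := ⨆ s : S, dTV (pol' s) (pol s)
  have hc : 0 ≤ c := Real.iSup_nonneg fun s => dTV_nonneg _ _
  have hpol : ∀ s, dTV (pol' s) (pol s) ≤ c :=
    le_ciSup ⟨1, Set.forall_mem_range.2 fun s => dTV_le_one _ _⟩
  have hstep : ∀ s, dTV (Ppol' s) (Ppol s) ≤ c := fun s => by
    rw [hP, hP']
    exact (dTV_bind_le _ _ (p.sectR s)).trans (hpol s)
  have hPκ : Ppol = p ∘ₖ (Kernel.id ×ₖ pol) :=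
    funext fun s => (hP s).trans (Kernel.comp_id_prod_apply p pol s).symm
  have hPκ' : Ppol' = p ∘ₖ (Kernel.id ×ₖ pol') :=
    funext fun s => (hP' s).trans (Kernel.comp_id_prod_apply p pol' s).symm
  rw [hPκ, hPκ'] at hstep ⊢
  exact Real.iSup_le (dTV_occ_le _ _ hβ0.le hβ1 hc hstep)
    (mul_nonneg (div_nonneg hβ0.le (sub_nonneg.2 hβ1.le)) hc)
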